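/- Every separable nonnegative matrix is sufficiently scattered: if cone(A) = ℝ₊^m, then the second-order cone 𝒞 = { x ∈ ℝ₊^m : 1ᵀx ≥ √(m−1)·‖x‖₂ } is contained in cone(A), and the only orthogonal matrices Q with cone(A) ⊆ cone(Q) are permutation matrices. -/

import Mathlib

/-!
Since cone(A) is the whole nonnegative orthant, the first claim is immediate. For the second, if the
orthant lies in cone(Q) then `Qᵀ = Q⁻¹` maps every standard basis vector into the orthant, so `Q` is
entrywise nonnegative. Nonnegative orthonormal rows (and columns) have pairwise disjoint supports,
which forces each row to be a standard basis vector, so `Q` is a permutation matrix.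
-/

open Matrix

namespace Matrix

variable {ι κ R : Type*} [Fintype κ]

theorem nonneg_of_mul_eq_one_of_orthant_subset_cone [Fintype ι] [DecidableEq ι] [DecidableEq κ]
    [Semiring R] [PartialOrder R] [IsOrderedRing R] {B : Matrix κ ι R} {Q : Matrix ι κ R}
    (h : B * Q = 1)
    (hcone : ∀ x : ι → R, (∀ i, 0 ≤ x i) → ∃ θ : κ → R, (∀ j, 0 ≤ θ j) ∧ x = Q *ᵥ θ)
    (j : κ) (i : ι) : 0 ≤ B j i := by
  obtain ⟨θ, hθ, hx⟩ := hcone (Pi.single i 1) (Pi.single_nonneg.mpr zero_le_one)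
  have hBθ : B *ᵥ Pi.single i 1 = θ := by rw [hx, mulVec_mulVec, h, one_mulVec]
  simpa [← hBθ, mulVec_single_one] using hθ j

theorem apply_mul_apply_eq_zero_of_mul_transpose_eq_one [DecidableEq ι] [Semiring R]
    [PartialOrder R] [IsOrderedRing R] {Q : Matrix ι κ R}
    (hQ : ∀ i j, 0 ≤ Q i j) (h : Q * Qᵀ = 1) {i i' : ι} (hii' : i ≠ i') (j : κ) :
    Q i j * Q i' j = 0 := by
  have hsum : ∑ j, Q i j * Q i' j = 0 := by
    simpa [mul_apply, one_apply_ne hii'] using congrFun (congrFun h i) i'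
  exact (Finset.sum_eq_zero_iff_of_nonneg fun j _ ↦ mul_nonneg (hQ i j) (hQ i' j)).mp hsum j
    (Finset.mem_univ j)

theorem exists_perm_eq_permMatrix_of_nonneg_of_transpose_mul_eq_one [DecidableEq κ] [CommRing R]
    [LinearOrder R] [IsStrictOrderedRing R] {Q : Matrix κ κ R}
    (hQ : ∀ i j, 0 ≤ Q i j) (h : Qᵀ * Q = 1) : ∃ σ : Equiv.Perm κ, Q = σ.permMatrix R := by
  have hrows : Q * Qᵀ = 1 := mul_eq_one_comm.mp h
  have hcols : Qᵀ * Qᵀᵀ = 1 := by rwa [transpose_transpose]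
  have hnorm (i : κ) : ∑ j, Q i j ^ 2 = 1 := by
    simpa [mul_apply, sq] using congrFun (congrFun hrows i) i
  have hne (i : κ) : ∃ j, Q i j ≠ 0 := by
    by_contra! h0
    simpa [h0] using hnorm i
  choose g hg using hne
  have hzero {i j} (hj : j ≠ g i) : Q i j = 0 := by
    have := apply_mul_apply_eq_zero_of_mul_transpose_eq_one (fun i j ↦ hQ j i) hcols hj i
    exact (mul_eq_zero.mp this).resolve_right (hg i)
  have hone (i : κ) : Q i (g i) = 1 := by
    have hsq := hnorm i
    rw [Finset.sum_eq_single (g i) (fun j _ hj ↦ by rw [hzero hj, sq, zero_mul]) (by simp)] at hsq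
    exact (pow_eq_one_iff_of_nonneg (hQ i (g i)) two_ne_zero).mp hsq
  have hinj : Function.Injective g := by
    intro i i' hii'
    by_contra hne
    have := apply_mul_apply_eq_zero_of_mul_transpose_eq_one hQ hrows hne (g i)
    rw [hone, hii', hone, one_mul] at this
    exact one_ne_zero this
  refine ⟨Equiv.ofBijective g (Finite.injective_iff_bijective.mp hinj), ?_⟩
  ext i j
  by_cases hj : j = g i
  · simp [Equiv.Perm.permMatrix, PEquiv.toMatrix_apply, hj, hone]
  · simp [Equiv.Perm.permMatrix, PEquiv.toMatrix_apply, hzero hj, Ne.symm hj]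

end Matrix

theorem separable_imp_sufficiently_scattered_general
    {m n : ℕ} (A : Matrix (Fin m) (Fin n) ℝ)
    (hsep : ∀ x : Fin m → ℝ,
      (∃ θ : Fin n → ℝ, (∀ j, 0 ≤ θ j) ∧ x = A.mulVec θ) ↔ ∀ i, 0 ≤ x i) :
    (∀ x : Fin m → ℝ, (∀ i, 0 ≤ x i) →
      Real.sqrt (m - 1) * Real.sqrt (∑ i, x i ^ 2) ≤ ∑ i, x i →
      ∃ θ : Fin n → ℝ, (∀ j, 0 ≤ θ j) ∧ x = A.mulVec θ) ∧
    (∀ Q : Matrix (Fin m) (Fin m) ℝ, Qᵀ * Q = 1 →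
      (∀ x : Fin m → ℝ, (∃ θ : Fin n → ℝ, (∀ j, 0 ≤ θ j) ∧ x = A.mulVec θ) →
        ∃ θ : Fin m → ℝ, (∀ j, 0 ≤ θ j) ∧ x = Q.mulVec θ) →
      ∃ σ : Equiv.Perm (Fin m), Q = σ.permMatrix ℝ) := by
  refine ⟨fun x hx _ ↦ (hsep x).mpr hx, fun Q hQ hcone ↦ ?_⟩
  have hQnn (i j : Fin m) : 0 ≤ Q i j :=
    nonneg_of_mul_eq_one_of_orthant_subset_cone hQ (fun x hx ↦ hcone x ((hsep x).mpr hx)) j i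
  exact exists_perm_eq_permMatrix_of_nonneg_of_transpose_mul_eq_one hQnn hQ

theorem separable_imp_sufficiently_scattered
    {m n : ℕ} (A : Matrix (Fin m) (Fin n) ℝ) (hA : ∀ i j, 0 ≤ A i j)
    (hsep : ∀ x : Fin m → ℝ,
      (∃ θ : Fin n → ℝ, (∀ j, 0 ≤ θ j) ∧ x = A.mulVec θ) ↔ ∀ i, 0 ≤ x i) :
    (∀ x : Fin m → ℝ, (∀ i, 0 ≤ x i) →
      Real.sqrt (m - 1) * Real.sqrt (∑ i, x i ^ 2) ≤ ∑ i, x i →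
      ∃ θ : Fin n → ℝ, (∀ j, 0 ≤ θ j) ∧ x = A.mulVec θ) ∧
    (∀ Q : Matrix (Fin m) (Fin m) ℝ, Qᵀ * Q = 1 →
      (∀ x : Fin m → ℝ, (∃ θ : Fin n → ℝ, (∀ j, 0 ≤ θ j) ∧ x = A.mulVec θ) →
        ∃ θ : Fin m → ℝ, (∀ j, 0 ≤ θ j) ∧ x = Q.mulVec θ) →
      ∃ σ : Equiv.Perm (Fin m), Q = σ.permMatrix ℝ) :=
  separable_imp_sufficiently_scattered_general A hsep
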